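/- arXiv:0812.5101 — 3 statements merged into one kernel-verified Lean document; each statement's English description precedes it below -/
import Mathlib

section
/- Every 4-regular multigraph admits a 2-cycle-coloring: its edges can be partitioned into two classes, each of which is a disjoint union of cycles (i.e., each class forms a 2-regular spanning subgraph). -/
open Finset Function Equiv

/-! View the multigraph through its half-edges, with the fixed-point-free involution `σ` swapping
the two ends of each edge. Any two fixed-point-free involutions `a`, `b` admit a 2-coloring flipped
by both: `a` maps each cycle of `b ∘ a` onto a *different* cycle (a cycle mapped to itself would
contain a fixed point of `a` or `b`), so a half-edge can be colored by comparing its cycle with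
that of its `a`-image in some linear order. Applied to `σ` and a pairing of the four half-edges at
each vertex, this gives an Eulerian orientation; applied to `σ` and a pairing of the two outgoing
and of the two incoming half-edges at each vertex, it gives a coloring whose xor with the
orientation is constant on edges and splits every vertex 2–2. -/

section Involutions

variable {X : Type*} {a b : X → X}

theorem apply_zpow_eq_zpow_neg_apply (ha : Involutive a) (hb : Involutive b) (j : ℤ) (x : X) :
    a (((hb.toPerm b * ha.toPerm a) ^ j) x) = ((hb.toPerm b * ha.toPerm a) ^ (-j)) (a x) := by
  set π := hb.toPerm b * ha.toPerm a
  have hinv : π⁻¹ = ha.toPerm a * hb.toPerm b :=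
    inv_eq_of_mul_eq_one_right (by ext y; simp [π, ha (b y), hb y])
  have hsemi : SemiconjBy (ha.toPerm a) π π⁻¹ := by
    rw [hinv]; simp [SemiconjBy, π, mul_assoc]
  simpa [inv_zpow'] using DFunLike.congr_fun (hsemi.zpow_right j).eq x

theorem not_sameCycle_apply_of_involutive (ha : Involutive a) (hb : Involutive b)
    (ha' : ∀ x, a x ≠ x) (hb' : ∀ x, b x ≠ x) (x : X) :
    ¬ (hb.toPerm b * ha.toPerm a).SameCycle x (a x) := by
  set π := hb.toPerm b * ha.toPerm a
  rintro ⟨k, hk⟩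
  rcases Int.even_or_odd' k with ⟨m, rfl | rfl⟩
  · apply ha' ((π ^ m) x)
    rw [apply_zpow_eq_zpow_neg_apply ha hb, ← hk, ← Perm.mul_apply, ← zpow_add]
    congr 2; ring
  · apply hb' ((π ^ (m + 1)) x)
    have hb_eq : ∀ y, b y = π (a y) := fun y => by simp [π, ha y]
    rw [hb_eq, apply_zpow_eq_zpow_neg_apply ha hb, ← hk, ← Perm.mul_apply, ← Perm.mul_apply]
    change (π * π ^ (-(m + 1)) * π ^ (2 * m + 1)) x = _
    rw [← zpow_one_add, ← zpow_add]
    congr 2; ring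

theorem exists_alternating_bool_of_involutive (ha : Involutive a) (hb : Involutive b)
    (ha' : ∀ x, a x ≠ x) (hb' : ∀ x, b x ≠ x) :
    ∃ f : X → Bool, ∀ x, f (a x) ≠ f x ∧ f (b x) ≠ f x := by
  set π := hb.toPerm b * ha.toPerm a
  let : LinearOrder (Quotient (Perm.SameCycle.setoid π)) := IsWellOrder.linearOrder WellOrderingRel
  let cycle : X → Quotient (Perm.SameCycle.setoid π) := Quotient.mk _
  have hne : ∀ x, cycle x ≠ cycle (a x) := fun x h =>
    not_sameCycle_apply_of_involutive ha hb ha' hb' x (Quotient.exact h)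
  have hba : ∀ x, cycle (b x) = cycle (a x) := fun x => Quotient.sound <|
    show π.SameCycle (b x) (a x) from ⟨-1, by simp [π, hb x]⟩
  have hab : ∀ x, cycle (a (b x)) = cycle x := fun x => Quotient.sound <|
    show π.SameCycle (a (b x)) x from ⟨1, by simp [π, ha (b x), hb x]⟩
  have decide_lt_ne_of_ne : ∀ {y z : Quotient (Perm.SameCycle.setoid π)}, y ≠ z →
      decide (z < y) ≠ decide (y < z) := fun h => by
    rcases h.lt_or_gt with h | h <;> simp [h, h.not_gt]
  refine ⟨fun x => decide (cycle x < cycle (a x)), fun x => ⟨?_, ?_⟩⟩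
  · dsimp only
    rw [ha x]
    exact decide_lt_ne_of_ne (hne x)
  · dsimp only
    rw [hba x, hab x]
    exact decide_lt_ne_of_ne (hne x)

end Involutions

theorem exists_fiberwise_involution_of_even_card {X Y : Type*} [Fintype X] [DecidableEq Y]
    (g : X → Y) (heven : ∀ y, Even #{x | g x = y}) :
    ∃ t : X → X, Involutive t ∧ (∀ x, t x ≠ x) ∧ ∀ x, g (t x) = g x := by
  choose k hk using heven
  have φ : ∀ y, {x // g x = y} ≃ Fin (k y) × Bool := fun y =>
    Fintype.equivOfCardEq (by simp [Fintype.card_subtype, hk y, mul_two])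
  let e : X ≃ Σ y, Fin (k y) × Bool := (sigmaFiberEquiv g).symm.trans (sigmaCongrRight φ)
  have he : ∀ s, g (e.symm s) = s.1 := fun s => ((φ s.1).symm s.2).2
  let flip : (Σ y, Fin (k y) × Bool) → Σ y, Fin (k y) × Bool := fun s => ⟨s.1, s.2.1, !s.2.2⟩
  refine ⟨e.symm ∘ flip ∘ e, fun x => ?_, fun x h => ?_, fun x => ?_⟩
  · simp only [comp_apply, apply_symm_apply]
    simp [flip]
  · rw [comp_apply, comp_apply, symm_apply_eq] at h
    simpa [flip] using congrArg (fun s => s.2.2) h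
  · rw [comp_apply, comp_apply, he, ← he (e x), symm_apply_apply]

theorem two_mul_card_filter_eq_of_involutive {X Y : Type*} [Fintype X] [DecidableEq Y]
    {t : X → X} (ht : Involutive t) {g : X → Y} {f : X → Bool} (hg : ∀ x, g (t x) = g x)
    (hf : ∀ x, f (t x) ≠ f x) (y : Y) (b : Bool) :
    2 * #{x | g x = y ∧ f x = b} = #{x | g x = y} := by
  have hmaps : ∀ b', Set.MapsTo t (({x | g x = y ∧ f x = b'} : Finset X) : Set X)
      ({x | g x = y ∧ f x = !b'} : Finset X) := by
    intro b' x hx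
    simp only [coe_filter, mem_univ, true_and] at hx ⊢
    exact ⟨(hg x).trans hx.1, hx.2 ▸ Bool.eq_not_of_ne (hf x)⟩
  have hswap : #{x | g x = y ∧ f x = b} = #{x | g x = y ∧ f x = !b} :=
    card_nbij' t t (hmaps b) (by simpa using hmaps !b) (fun x _ => ht x) (fun x _ => ht x)
  rw [two_mul, ← card_filter_add_card_filter_not (s := {x | g x = y}) (fun x => f x = b)]
  simp only [filter_filter, ← ne_eq, ← Bool.eq_not_iff]
  rw [hswap]

theorem exists_balanced_coloring_of_four_dvd {X V : Type*} [Fintype X] [DecidableEq V]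
    {σ : X → X} (hσ : Involutive σ) (hσ' : ∀ x, σ x ≠ x) (ep : X → V)
    (hdeg : ∀ v, 4 ∣ #{x | ep x = v}) :
    ∃ F : X → Bool, (∀ x, F (σ x) = F x) ∧
      ∀ v b, 2 * #{x | ep x = v ∧ F x = b} = #{x | ep x = v} := by
  obtain ⟨c, hc, hc', hcep⟩ := exists_fiberwise_involution_of_even_card ep fun v =>
    (hdeg v).even (by decide)
  obtain ⟨h, hh⟩ := exists_alternating_bool_of_involutive hσ hc hσ' hc'
  have hhalf := two_mul_card_filter_eq_of_involutive hc hcep (fun x => (hh x).2)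
  obtain ⟨d, hd, hd', hdep⟩ := exists_fiberwise_involution_of_even_card (fun x => (ep x, h x))
    fun p => by
      obtain ⟨k, hk⟩ := hdeg p.1
      have := hhalf p.1 p.2
      simp only [Prod.ext_iff]
      exact even_iff_two_dvd.2 ⟨k, by omega⟩
  obtain ⟨G, hG⟩ := exists_alternating_bool_of_involutive hσ hd hσ' hd'
  -- both `G` and `h` flip along an edge, while along a `d`-pair only `G` does
  refine ⟨fun x => xor (G x) (h x), fun x => ?_, ?_⟩
  · change xor (G (σ x)) (h (σ x)) = xor (G x) (h x)
    rw [Bool.eq_not_of_ne (hG x).1, Bool.eq_not_of_ne (hh x).1, Bool.not_xor_not]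
  · refine two_mul_card_filter_eq_of_involutive hd (fun x => (Prod.mk.inj (hdep x)).1) ?_
    intro x
    rw [Bool.eq_not_of_ne (hG x).2, (Prod.mk.inj (hdep x)).2]
    simp

/-- The half-edges of `ends` are `E × Bool`; `(e, true)` and `(e, false)` sit at the two ends
of `e`. -/
noncomputable def endpoint {E V : Type*} (ends : E → Sym2 V) (x : E × Bool) : V :=
  if x.2 then (ends x.1).out.1 else (ends x.1).out.2

theorem card_filter_endpoint_eq {E V : Type*} [Fintype E] [DecidableEq V] {ends : E → Sym2 V}
    (hloop : ∀ e, ¬ (ends e).IsDiag) (P : E → Prop) [DecidablePred P] (v : V) :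
    #{x : E × Bool | endpoint ends x = v ∧ P x.1} = #{e | v ∈ ends e ∧ P e} := by
  have hends : ∀ e, ends e = s((ends e).out.1, (ends e).out.2) := fun e => (Quot.out_eq _).symm
  apply card_nbij Prod.fst
  · rintro ⟨e, s⟩ hx
    simp only [coe_filter, mem_univ, true_and, Set.mem_ofPred_eq] at hx ⊢
    refine ⟨?_, hx.2⟩
    rw [← hx.1]
    cases s
    · exact Sym2.out_snd_mem _
    · exact Sym2.out_fst_mem _
  · rintro ⟨e, s⟩ hx ⟨e', s'⟩ hx' (rfl : e = e')
    simp only [coe_filter, mem_univ, true_and, Set.mem_ofPred_eq] at hx hx'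
    have hne := hloop e
    rw [hends e, Sym2.mk_isDiag_iff] at hne
    cases s <;> cases s' <;> simp only [endpoint] at hx hx'
    · rfl
    · exact absurd (hx'.1.trans hx.1.symm) hne
    · exact absurd (hx.1.trans hx'.1.symm) hne
    · rfl
  · intro e he
    simp only [coe_filter, mem_univ, true_and, Set.mem_ofPred_eq] at he
    obtain ⟨hv, hP⟩ := he
    rw [hends e, Sym2.mem_iff] at hv
    rcases hv with hv | hv
    · exact ⟨(e, true), by simp [endpoint, hv, hP], rfl⟩
    · exact ⟨(e, false), by simp [endpoint, hv, hP], rfl⟩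

theorem stmt6_general {V E : Type*} [DecidableEq V] [Fintype E]
    (ends : E → Sym2 V)
    (hloop : ∀ e, ¬ (ends e).IsDiag)
    (hreg : ∀ v, (Finset.univ.filter (fun e => v ∈ ends e)).card = 4) :
    ∃ f : E → Bool, ∀ (v : V) (b : Bool),
      (Finset.univ.filter (fun e => v ∈ ends e ∧ f e = b)).card = 2 := by
  have hdeg : ∀ v, #{x | endpoint ends x = v} = 4 := fun v => by
    simpa [hreg v] using card_filter_endpoint_eq hloop (fun _ => True) v
  obtain ⟨F, hFσ, hF⟩ := exists_balanced_coloring_of_four_dvd (σ := Prod.map id not)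
    (fun x => by simp [Prod.map]) (fun x => by simp [Prod.ext_iff]) (endpoint ends)
    (fun v => (hdeg v).symm ▸ dvd_rfl)
  have hF_edge : ∀ x : E × Bool, F x = F (x.1, true) := by
    rintro ⟨e, _ | _⟩
    · exact (hFσ (e, false)).symm
    · rfl
  refine ⟨fun e => F (e, true), fun v b => ?_⟩
  have hfilter : univ.filter (fun x => endpoint ends x = v ∧ F x = b) =
      univ.filter (fun x => endpoint ends x = v ∧ F (x.1, true) = b) :=
    filter_congr fun x _ => by rw [← hF_edge x]
  have := hF v b
  rw [hfilter, hdeg] at this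
  rw [← card_filter_endpoint_eq hloop]
  beta_reduce
  omega

/-- every loopless 4-regular multigraph (at most two parallel edges between any
pair of vertices) admits a 2-cycle-coloring: the edges can be colored with two colors so that
every vertex has degree exactly 2 in each color class. -/
theorem stmt6 {V E : Type*} [Fintype V] [DecidableEq V] [Fintype E] [DecidableEq E]
    (ends : E → Sym2 V)
    (hloop : ∀ e, ¬ (ends e).IsDiag)
    (hmult : ∀ p : Sym2 V, (Finset.univ.filter (fun e => ends e = p)).card ≤ 2)
    (hreg : ∀ v, (Finset.univ.filter (fun e => v ∈ ends e)).card = 4) :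
    ∃ f : E → Bool, ∀ (v : V) (b : Bool),
      (Finset.univ.filter (fun e => v ∈ ends e ∧ f e = b)).card = 2 :=
  stmt6_general ends hloop hreg
end

section
/- If a 4-regular loopless multigraph H can be well 2-cycle-colored (2-cycle-colored so that every monochromatic cycle has length at least 5), then there exists a set E' of edges with w(E') ≤ (1/5) w(H) such that H minus E' can be 2-path-colored (edges colored with two colors, each color class a disjoint union of simple paths). -/
/-!
Each color class of the 2-cycle-coloring is 2-regular, so it splits into vertex-disjoint
cycles, each of length at least 5 by assumption. Deleting a lightest edge of every such cycle
costs at most a fifth of the weight of the cycle, and what is left of each color class is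
a family of paths: a nonempty edge set without a vertex of degree 1 inside a 2-regular class is
a union of whole cycles, and every cycle lost an edge.
-/

open Finset

variable {V E : Type*}

/-- Degree of a vertex in a set of multigraph edges given by their endpoints. -/
def mdeg [DecidableEq V] (ends : E → Sym2 V) (s : Finset E) (v : V) : ℕ :=
  (s.filter (fun e => v ∈ ends e)).card

/-- A nonempty connected edge set in which every incident vertex has degree exactly 2:
a single cycle. -/
def IsCycleSet [DecidableEq V] [DecidableEq E] (ends : E → Sym2 V) (s : Finset E) : Prop :=
  s.Nonempty ∧ (∀ v, mdeg ends s v = 0 ∨ mdeg ends s v = 2) ∧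
    ∀ t ⊆ s, t.Nonempty → t ≠ s →
      ∃ e ∈ t, ∃ e' ∈ s \ t, ∃ v : V, v ∈ ends e ∧ v ∈ ends e'

/-- An edge set forming a vertex-disjoint union of simple paths: all degrees are at most 2
and every nonempty subset has a vertex of degree 1 (no cycles). -/
def IsPathFamily [DecidableEq V] [DecidableEq E] (ends : E → Sym2 V) (s : Finset E) : Prop :=
  (∀ v, mdeg ends s v ≤ 2) ∧ ∀ t ⊆ s, t.Nonempty → ∃ v, mdeg ends t v = 1

theorem exists_hitting_set_sum_le [DecidableEq E] {P : Finset (Finset E)}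
    (hP : (P : Set (Finset E)).PairwiseDisjoint id) {w : E → ℝ} (hw : ∀ e, 0 ≤ w e) {k : ℕ}
    (hk : 0 < k) (hPk : ∀ C ∈ P, k ≤ #C) :
    ∃ D ⊆ P.biUnion id, (∀ C ∈ P, (C ∩ D).Nonempty) ∧
      k * ∑ x ∈ D, w x ≤ ∑ x ∈ P.biUnion id, w x := by
  have hne : ∀ C ∈ P, C.Nonempty := fun C hC => card_pos.1 (hk.trans_le (hPk C hC))
  rcases P.eq_empty_or_nonempty with rfl | ⟨C₀, hC₀⟩
  · exact ⟨∅, by simp⟩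
  have : Nonempty E := ⟨(hne C₀ hC₀).choose⟩
  choose! m hmC hmin using fun C (hC : C ∈ P) => C.exists_min_image w (hne C hC)
  refine ⟨P.image m, ?_, fun C hC => ⟨m C, mem_inter.2 ⟨hmC C hC, mem_image_of_mem m hC⟩⟩, ?_⟩
  · intro x hx
    obtain ⟨C, hC, rfl⟩ := mem_image.1 hx
    exact mem_biUnion.2 ⟨C, hC, hmC C hC⟩
  have hblock : ∀ C ∈ P, k * w (m C) ≤ ∑ x ∈ C, w x := fun C hC =>
    calc k * w (m C) ≤ #C * w (m C) := by gcongr; exacts [hw _, hPk C hC]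
      _ ≤ ∑ x ∈ C, w x := by simpa using C.card_nsmul_le_sum w (w (m C)) (hmin C hC)
  calc k * ∑ x ∈ P.image m, w x ≤ k * ∑ C ∈ P, w (m C) := by
        gcongr
        exact sum_image_le_of_nonneg fun x _ => hw x
    _ ≤ ∑ C ∈ P, ∑ x ∈ C, w x := by
        rw [mul_sum]
        exact sum_le_sum hblock
    _ = ∑ x ∈ P.biUnion id, w x := (sum_biUnion hP).symm

section Degree

variable [DecidableEq V] {ends : E → Sym2 V} {s t : Finset E}

theorem mdeg_mono (h : t ⊆ s) (v : V) : mdeg ends t v ≤ mdeg ends s v :=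
  card_le_card (filter_subset_filter _ h)

theorem mem_of_mdeg_eq (h : t ⊆ s) {v : V} (hv : mdeg ends s v ≤ mdeg ends t v) {y : E}
    (hy : y ∈ s) (hvy : v ∈ ends y) : y ∈ t := by
  have heq := eq_of_subset_of_card_le (filter_subset_filter (fun e => v ∈ ends e) h) hv
  exact (mem_filter.1 (heq ▸ mem_filter.2 ⟨hy, hvy⟩)).1

end Degree

section Components

variable (ends : E → Sym2 V) (s : Finset E)

def EdgeAdj (x y : E) : Prop :=
  x ∈ s ∧ y ∈ s ∧ ∃ v, v ∈ ends x ∧ v ∈ ends y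

instance : Std.Symm (EdgeAdj ends s) where
  symm _ _ := fun ⟨hx, hy, v, hvx, hvy⟩ => ⟨hy, hx, v, hvy, hvx⟩

open Classical in
noncomputable def component (e : E) : Finset E :=
  s.filter (Relation.ReflTransGen (EdgeAdj ends s) e)

variable {ends s}

theorem mem_component {e x : E} :
    x ∈ component ends s e ↔ x ∈ s ∧ Relation.ReflTransGen (EdgeAdj ends s) e x := by
  simp [component]

theorem component_subset (e : E) : component ends s e ⊆ s :=
  fun _ hx => (mem_component.1 hx).1

theorem self_mem_component {e : E} (he : e ∈ s) : e ∈ component ends s e :=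
  mem_component.2 ⟨he, .refl⟩

theorem component_eq_of_mem {e x : E} (hx : x ∈ component ends s e) :
    component ends s x = component ends s e := by
  have hex := (mem_component.1 hx).2
  ext y
  simp only [mem_component, and_congr_right_iff]
  exact fun _ => ⟨hex.trans, fun hey => (symm hex).trans hey⟩

theorem component_subset_of_closed {t : Finset E}
    (ht : ∀ x ∈ t, ∀ y, EdgeAdj ends s x y → y ∈ t) {x : E} (hx : x ∈ t) :
    component ends s x ⊆ t := by
  intro y hy
  obtain ⟨-, hxy⟩ := mem_component.1 hy
  clear hy
  induction hxy with
  | refl => exact hx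
  | tail _ hyz ih => exact ht _ ih _ hyz

theorem exists_edgeAdj_of_ssubset_component [DecidableEq E] {e : E} {t : Finset E}
    (hts : t ⊂ component ends s e) (ht : t.Nonempty) :
    ∃ x ∈ t, ∃ y ∈ component ends s e \ t, EdgeAdj ends s x y := by
  by_contra! hclosed
  obtain ⟨x, hx⟩ := ht
  have hxe := component_eq_of_mem (hts.subset hx)
  refine hts.not_subset (hxe ▸ component_subset_of_closed (fun y hy z hyz => ?_) hx)
  by_contra hz
  have hyC := hts.subset hy
  exact hclosed y hy z (mem_sdiff.2 ⟨mem_component.2 ⟨hyz.2.1,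
    (mem_component.1 hyC).2.tail hyz⟩, hz⟩) hyz

theorem mdeg_component [DecidableEq V] {e x : E} (hx : x ∈ component ends s e) {v : V}
    (hv : v ∈ ends x) : mdeg ends (component ends s e) v = mdeg ends s v := by
  refine le_antisymm (mdeg_mono (component_subset e) v) (card_le_card fun y hy => ?_)
  obtain ⟨hys, hvy⟩ := mem_filter.1 hy
  have hxs := component_subset e hx
  exact mem_filter.2 ⟨mem_component.2 ⟨hys, (mem_component.1 hx).2.tail
    ⟨hxs, hys, v, hv, hvy⟩⟩, hvy⟩

theorem isCycleSet_component [DecidableEq V] [DecidableEq E] (hs : ∀ v, mdeg ends s v = 2)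
    {e : E} (he : e ∈ s) : IsCycleSet ends (component ends s e) := by
  refine ⟨⟨e, self_mem_component he⟩, fun v => ?_, fun t hts ht hne => ?_⟩
  · by_cases hv : ∃ x ∈ component ends s e, v ∈ ends x
    · obtain ⟨x, hx, hvx⟩ := hv
      exact .inr ((mdeg_component hx hvx).trans (hs v))
    · push Not at hv
      exact .inl (card_eq_zero.2 (filter_eq_empty_iff.2 hv))
  · obtain ⟨x, hx, y, hy, -, -, v, hvx, hvy⟩ :=
      exists_edgeAdj_of_ssubset_component (ssubset_of_subset_of_ne hts hne) ht
    exact ⟨x, hx, y, hy, v, hvx, hvy⟩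

variable (ends s)

noncomputable def components [DecidableEq E] : Finset (Finset E) :=
  s.image (component ends s)

variable {ends s}

theorem pairwiseDisjoint_components [DecidableEq E] :
    (components ends s : Set (Finset E)).PairwiseDisjoint id := by
  rintro _ hC _ hD hCD
  obtain ⟨e, -, rfl⟩ := mem_image.1 hC
  obtain ⟨f, -, rfl⟩ := mem_image.1 hD
  refine disjoint_left.2 fun x hxe hxf => hCD ?_
  exact (component_eq_of_mem hxe).symm.trans (component_eq_of_mem hxf)

theorem biUnion_components [DecidableEq E] : (components ends s).biUnion id = s := by
  refine Subset.antisymm (biUnion_subset.2 fun C hC => ?_) fun e he => ?_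
  · obtain ⟨e, -, rfl⟩ := mem_image.1 hC
    exact component_subset e
  · exact mem_biUnion.2 ⟨_, mem_image_of_mem _ he, self_mem_component he⟩

theorem isPathFamily_of_subset_sdiff [DecidableEq V] [DecidableEq E]
    (hs : ∀ v, mdeg ends s v = 2) {D : Finset E}
    (hD : ∀ C ∈ components ends s, (C ∩ D).Nonempty) {u : Finset E}
    (hu : u ⊆ s \ D) : IsPathFamily ends u := by
  have hus : u ⊆ s := hu.trans sdiff_subset
  refine ⟨fun v => (mdeg_mono hus v).trans (hs v).le, fun t htu ht => ?_⟩
  by_contra! hnot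
  have hts := htu.trans hus
  have hclosed : ∀ x ∈ t, ∀ y, EdgeAdj ends s x y → y ∈ t := by
    rintro x hx y ⟨-, hy, v, hvx, hvy⟩
    have hpos : 0 < mdeg ends t v := card_pos.2 ⟨x, mem_filter.2 ⟨hx, hvx⟩⟩
    have hle : mdeg ends t v ≤ mdeg ends s v := mdeg_mono hts v
    refine mem_of_mdeg_eq hts ?_ hy hvy
    have := hnot v
    have := hs v
    omega
  obtain ⟨x, hx⟩ := ht
  obtain ⟨y, hy⟩ := hD _ (mem_image_of_mem _ (hts hx))
  obtain ⟨hyC, hyD⟩ := mem_inter.1 hy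
  exact (mem_sdiff.1 (hu (htu (component_subset_of_closed hclosed hx hyC)))).2 hyD

end Components

theorem stmt7_general [DecidableEq V] [Fintype E] [DecidableEq E]
    (ends : E → Sym2 V) (w : E → ℝ) (hw : ∀ e, 0 ≤ w e)
    (g : E → Bool)
    (hcyc : ∀ (v : V) (b : Bool), mdeg ends (Finset.univ.filter (fun e => g e = b)) v = 2)
    (hwell : ∀ s : Finset E, (∃ b, ∀ e ∈ s, g e = b) → IsCycleSet ends s → 5 ≤ s.card) :
    ∃ E' : Finset E, (∑ e ∈ E', w e) ≤ (1 / 5) * ∑ e : E, w e ∧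
      ∃ f : E → Bool, ∀ b : Bool,
        IsPathFamily ends ((Finset.univ \ E').filter (fun e => f e = b)) := by
  set S : Bool → Finset E := fun b => univ.filter (fun e => g e = b)
  have hlong : ∀ b, ∀ C ∈ components ends (S b), 5 ≤ #C := by
    intro b C hC
    obtain ⟨e, he, rfl⟩ := mem_image.1 hC
    refine hwell _ ⟨b, fun x hx => (mem_filter.1 (component_subset e hx)).2⟩ ?_
    exact isCycleSet_component (hcyc · b) he
  choose D hDS hDhit hDw using fun b =>
    exists_hitting_set_sum_le pairwiseDisjoint_components hw (by norm_num) (hlong b)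
  simp only [biUnion_components] at hDS hDw
  refine ⟨D true ∪ D false, ?_, g, fun b => isPathFamily_of_subset_sdiff (hcyc · b) (hDhit b) ?_⟩
  · have hdisj : Disjoint (D true) (D false) :=
      (disjoint_filter.2 fun e _ he => by simp [he]).mono (hDS true) (hDS false)
    have htotal : ∑ e ∈ S true, w e + ∑ e ∈ S false, w e = ∑ e, w e := by
      rw [← sum_fiberwise univ g w, Fintype.sum_bool]
    rw [sum_union hdisj]
    push_cast at hDw
    linarith [hDw true, hDw false]
  · intro e he
    obtain ⟨he', hge⟩ := mem_filter.1 he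
    refine mem_sdiff.2 ⟨mem_filter.2 ⟨mem_univ e, hge⟩, fun heD => (mem_sdiff.1 he').2 ?_⟩
    cases b
    exacts [mem_union_right _ heD, mem_union_left _ heD]

/-- if a loopless 4-regular multigraph `H` can be well 2-cycle-colored (a
2-cycle-coloring `g` in which every monochromatic cycle has length at least 5), then there is
a set `E'` of edges with `w(E') ≤ (1/5) w(H)` whose removal leaves a 2-path-colorable graph. -/
theorem stmt7 [Fintype V] [DecidableEq V] [Fintype E] [DecidableEq E]
    (ends : E → Sym2 V) (w : E → ℝ) (hw : ∀ e, 0 ≤ w e)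
    (hloop : ∀ e, ¬ (ends e).IsDiag)
    (hmult : ∀ p : Sym2 V, (Finset.univ.filter (fun e => ends e = p)).card ≤ 2)
    (hreg : ∀ v, mdeg ends Finset.univ v = 4)
    (g : E → Bool)
    (hcyc : ∀ (v : V) (b : Bool), mdeg ends (Finset.univ.filter (fun e => g e = b)) v = 2)
    (hwell : ∀ s : Finset E, (∃ b, ∀ e ∈ s, g e = b) → IsCycleSet ends s → 5 ≤ s.card) :
    ∃ E' : Finset E, (∑ e ∈ E', w e) ≤ (1 / 5) * ∑ e : E, w e ∧
      ∃ f : E → Bool, ∀ b : Bool,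
        IsPathFamily ends ((Finset.univ \ E').filter (fun e => f e = b)) :=
  stmt7_general ends w hw g hcyc hwell
end

section
/- If a monochromatic cycle c in a colored graph consists only of charged edges, where the charged edges are k ≥ 2 blank edges on c together with their heads, then either every blank edge on c is immediately followed (clockwise) by its own head, or every blank edge on c is immediately preceded by its head; in particular, the segments between consecutive blank edges each consist of a single edge. -/
/-!
Every non-blank edge of the cycle is a head of an adjacent blank edge. If a blank edge `c i`
has its head behind it, then `c (i + 1)` is not its head, so it is the head of a blank edge
`c (i + 2)`, whose head is again behind it. Iterating, and using that `c (j - 1)` and `c j`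
cannot both be blank, every blank edge has its head behind it. Otherwise every blank edge has
its head in front, and then `c (i + 2)` cannot be a non-blank edge: it would be a head of
`c (i + 1)`, which is not blank, or of `c (i + 3)`, which has its head in front.
-/

theorem ZMod.two_ne_zero_of_three_le {m : ℕ} (hm : 3 ≤ m) : (2 : ZMod m) ≠ 0 := by
  have : ((2 : ℕ) : ZMod m) ≠ 0 := by
    rw [Ne, ZMod.natCast_eq_zero_iff]
    exact fun h => absurd (Nat.le_of_dvd two_pos h) (by omega)
  exact_mod_cast this

theorem ZMod.exists_eq_add_two_mul_or_eq_add_two_mul_add_one {m : ℕ} [NeZero m] (i j : ZMod m) :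
    ∃ t : ℕ, j = i + 2 * t ∨ j = i + 2 * t + 1 := by
  obtain ⟨t, ht⟩ := Nat.even_or_odd' (j - i).val
  refine ⟨t, ?_⟩
  have hval : (((j - i).val : ℕ) : ZMod m) = j - i := ZMod.natCast_zmod_val (j - i)
  rcases ht with ht | ht
  · left
    rw [ht] at hval
    push_cast at hval
    linear_combination -hval
  · right
    rw [ht] at hval
    push_cast at hval
    linear_combination -hval

section ChargedCycle

variable {E : Type*} {m : ℕ} {c : ZMod m → E} {blank : E → Prop} {heads : E → Finset E}

structure IsChargedCycle (c : ZMod m → E) (blank : E → Prop) (heads : E → Finset E) : Prop where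
  heads_one_side : ∀ i, blank (c i) →
    (∀ j, c j ∈ heads (c i) → j = i + 1) ∨ (∀ j, c j ∈ heads (c i) → j = i - 1)
  not_blank_add_one : ∀ i, blank (c i) → ¬ blank (c (i + 1))
  charged : ∀ i, blank (c i) ∨ ∃ j, blank (c j) ∧ c i ∈ heads (c j)

namespace IsChargedCycle

theorem exists_adjacent_blank_mem_heads (h : IsChargedCycle c blank heads) {i : ZMod m}
    (hi : ¬ blank (c i)) :
    (blank (c (i - 1)) ∧ c i ∈ heads (c (i - 1))) ∨
      (blank (c (i + 1)) ∧ c i ∈ heads (c (i + 1))) := by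
  obtain ⟨j, hj, hmem⟩ := (h.charged i).resolve_left hi
  rcases h.heads_one_side j hj with hfront | hback
  · obtain rfl : j = i - 1 := eq_sub_of_add_eq (hfront i hmem).symm
    exact Or.inl ⟨hj, hmem⟩
  · obtain rfl : j = i + 1 := eq_add_of_sub_eq (hback i hmem).symm
    exact Or.inr ⟨hj, hmem⟩

theorem add_one_not_mem_heads_of_sub_one_mem_heads (h : IsChargedCycle c blank heads)
    (h2 : (2 : ZMod m) ≠ 0) {i : ZMod m} (hi : blank (c i)) (hback : c (i - 1) ∈ heads (c i)) :
    c (i + 1) ∉ heads (c i) := by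
  intro hfront
  rcases h.heads_one_side i hi with hside | hside
  · exact h2 (by linear_combination -(hside _ hback))
  · exact h2 (by linear_combination hside _ hfront)

theorem add_one_mem_heads_or_mem_heads_add_two (h : IsChargedCycle c blank heads) {i : ZMod m}
    (hi : blank (c i)) :
    c (i + 1) ∈ heads (c i) ∨ (blank (c (i + 2)) ∧ c (i + 2 - 1) ∈ heads (c (i + 2))) := by
  rcases h.exists_adjacent_blank_mem_heads (h.not_blank_add_one i hi) with ⟨-, hmem⟩ | ⟨hb, hmem⟩
  · rw [add_sub_cancel_right] at hmem
    exact Or.inl hmem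
  · rw [add_assoc, one_add_one_eq_two] at hb hmem
    exact Or.inr ⟨hb, by rwa [add_sub_assoc, show (2 : ZMod m) - 1 = 1 by norm_num]⟩

theorem sub_one_mem_heads_add_two (h : IsChargedCycle c blank heads) (h2 : (2 : ZMod m) ≠ 0)
    {i : ZMod m} (hi : blank (c i)) (hback : c (i - 1) ∈ heads (c i)) :
    blank (c (i + 2)) ∧ c (i + 2 - 1) ∈ heads (c (i + 2)) :=
  (h.add_one_mem_heads_or_mem_heads_add_two hi).resolve_left
    (h.add_one_not_mem_heads_of_sub_one_mem_heads h2 hi hback)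

theorem sub_one_mem_heads_add_two_mul (h : IsChargedCycle c blank heads) (h2 : (2 : ZMod m) ≠ 0)
    {i : ZMod m} (hi : blank (c i)) (hback : c (i - 1) ∈ heads (c i)) (t : ℕ) :
    blank (c (i + 2 * t)) ∧ c (i + 2 * t - 1) ∈ heads (c (i + 2 * t)) := by
  induction t with
  | zero => simpa using ⟨hi, hback⟩
  | succ t ih =>
    rw [Nat.cast_succ, mul_add_one, ← add_assoc]
    exact h.sub_one_mem_heads_add_two h2 ih.1 ih.2

theorem sub_one_mem_heads_of_sub_one_mem_heads [NeZero m] (h : IsChargedCycle c blank heads)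
    (h2 : (2 : ZMod m) ≠ 0) {i j : ZMod m} (hi : blank (c i)) (hback : c (i - 1) ∈ heads (c i))
    (hj : blank (c j)) : c (j - 1) ∈ heads (c j) := by
  obtain ⟨t, rfl | rfl⟩ := ZMod.exists_eq_add_two_mul_or_eq_add_two_mul_add_one i j
  · exact (h.sub_one_mem_heads_add_two_mul h2 hi hback t).2
  · exact absurd hj (h.not_blank_add_one _ (h.sub_one_mem_heads_add_two_mul h2 hi hback t).1)

theorem blank_add_two_of_forall_sub_one_not_mem_heads (h : IsChargedCycle c blank heads)
    (hfront : ∀ j, blank (c j) → c (j - 1) ∉ heads (c j)) {i : ZMod m} (hi : blank (c i)) :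
    blank (c (i + 2)) := by
  by_contra hnb
  rcases h.exists_adjacent_blank_mem_heads hnb with ⟨hb, -⟩ | ⟨hb, hmem⟩
  · exact h.not_blank_add_one i hi (by rwa [show i + 2 - 1 = i + 1 by ring] at hb)
  · exact hfront _ hb (by rwa [add_sub_cancel_right])

end IsChargedCycle

end ChargedCycle

theorem stmt8_general {E : Type*} (m : ℕ) [NeZero m] (hm : 3 ≤ m)
    (c : ZMod m → E)
    (blank : E → Prop)
    (heads : E → Finset E)
    (hside : ∀ i, blank (c i) →
      (∀ j, c j ∈ heads (c i) → j = i + 1) ∨ (∀ j, c j ∈ heads (c i) → j = i - 1))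
    (hnonadj : ∀ i, blank (c i) → ¬ blank (c (i + 1)))
    (hcharged : ∀ i, blank (c i) ∨ ∃ j, blank (c j) ∧ c i ∈ heads (c j)) :
    ((∀ i, blank (c i) → c (i + 1) ∈ heads (c i)) ∨
      (∀ i, blank (c i) → c (i - 1) ∈ heads (c i))) ∧
      ∀ i, blank (c i) → blank (c (i + 2)) := by
  have h : IsChargedCycle c blank heads := ⟨hside, hnonadj, hcharged⟩
  have h2 := ZMod.two_ne_zero_of_three_le hm
  by_cases hback : ∃ i, blank (c i) ∧ c (i - 1) ∈ heads (c i)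
  · obtain ⟨i, hi, hi_back⟩ := hback
    have hall := fun j (hj : blank (c j)) =>
      h.sub_one_mem_heads_of_sub_one_mem_heads h2 hi hi_back hj
    exact ⟨Or.inr hall, fun j hj => (h.sub_one_mem_heads_add_two h2 hj (hall j hj)).1⟩
  · push Not at hback
    refine ⟨Or.inl fun i hi => ?_, fun i => h.blank_add_two_of_forall_sub_one_not_mem_heads hback⟩
    exact (h.add_one_mem_heads_or_mem_heads_add_two hi).resolve_right fun ⟨hb, hmem⟩ =>
      hback _ hb hmem

/-- if a monochromatic cycle `c` (a cyclic sequence of `m` distinct edges)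
consists only of charged edges — `k ≥ 2` blank edges together with their heads, where the
heads of a blank edge on the cycle are adjacent to it and lie on a single side, and blank
edges are pairwise non-adjacent — then either every blank edge is immediately followed by its
own head, or every blank edge is immediately preceded by its own head; in particular the
segments between consecutive blank edges each consist of a single edge. -/
theorem stmt8 {E : Type*} [DecidableEq E] (m : ℕ) [NeZero m] (hm : 3 ≤ m)
    (c : ZMod m → E) (hinj : Function.Injective c)
    (blank : E → Prop) [DecidablePred blank]
    (heads : E → Finset E)
    (hside : ∀ i, blank (c i) →
      (∀ j, c j ∈ heads (c i) → j = i + 1) ∨ (∀ j, c j ∈ heads (c i) → j = i - 1))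
    (hnonadj : ∀ i, blank (c i) → ¬ blank (c (i + 1)))
    (hcharged : ∀ i, blank (c i) ∨ ∃ j, blank (c j) ∧ c i ∈ heads (c j))
    (hk : 2 ≤ (Finset.univ.filter (fun i => blank (c i))).card) :
    ((∀ i, blank (c i) → c (i + 1) ∈ heads (c i)) ∨
      (∀ i, blank (c i) → c (i - 1) ∈ heads (c i))) ∧
      ∀ i, blank (c i) → blank (c (i + 2)) :=
  stmt8_general m hm c blank heads hside hnonadj hcharged
end
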